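/- Let K be a field of characteristic zero and α₂, α₁, α₀, β ∈ K. Let L be the D2 operator with parameters (α₂, α₁, α₀, β) and let L̃ be its formal derivative with respect to D, namely L̃ = 2D + α₂t(2D + 1) + 2α₁t²(D+1) + α₀t³(2D + 3). Suppose φ₀ ∈ K[[t]] has constant coefficient 1 and L(φ₀) = 0, and ψ ∈ K[[t]] has constant coefficient 0 and L(ψ) + L̃(φ₀) = 0 (so that (log t)·φ₀ + ψ is formally annihilated by L). Then (1 + α₂t + α₁t² + α₀t³)·(φ₀² + (Dψ)·φ₀ − ψ·(Dφ₀)) = 1 in K[[t]]. -/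

import Mathlib

open PowerSeries

/-- The Euler operator `D = t·d/dt` on formal power series: `D(tⁿ) = n·tⁿ`. -/
noncomputable def eulerD {K : Type*} [Semiring K] (f : PowerSeries K) : PowerSeries K :=
  PowerSeries.mk fun n => (n : K) * PowerSeries.coeff n f

/-- The operator `D + c`. -/
noncomputable def eulerDplus {K : Type*} [Semiring K] (c : K) (f : PowerSeries K) :
    PowerSeries K :=
  eulerD f + C c * f

/-- The D2 operator `D² + t(α₂D² + α₂D − β) + α₁t²(D+1)² + α₀t³(D+1)(D+2)`. -/
noncomputable def D2op {K : Type*} [Field K] (α₂ α₁ α₀ β : K) (φ : PowerSeries K) :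
    PowerSeries K :=
  eulerD (eulerD φ)
    + X * (C α₂ * eulerD (eulerD φ) + C α₂ * eulerD φ - C β * φ)
    + C α₁ * X ^ 2 * eulerDplus 1 (eulerDplus 1 φ)
    + C α₀ * X ^ 3 * eulerDplus 1 (eulerDplus 2 φ)

/-- The formal derivative of the D2 operator with respect to `D`:
`L̃ = 2D + α₂t(2D + 1) + 2α₁t²(D+1) + α₀t³(2D + 3)`. -/
noncomputable def D2til {K : Type*} [Field K] (α₂ α₁ α₀ : K) (φ : PowerSeries K) :
    PowerSeries K :=
  2 * eulerD φ
    + C α₂ * X * (2 * eulerD φ + φ)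
    + 2 * (C α₁ * X ^ 2 * eulerDplus 1 φ)
    + C α₀ * X ^ 3 * (2 * eulerD φ + 3 * φ)

/-!
Writing `P = 1 + α₂t + α₁t² + α₀t³`, the D2 operator is in self-adjoint form
`L φ = D(P·Dφ) + R·φ` with `R = −βt + α₁t² + 2α₀t³`, and `L̃ φ = 2P·Dφ + (DP)·φ`.
For `W = φ₀² + Dψ·φ₀ − ψ·Dφ₀` Leibniz' rule gives Abel's identity
`D(P·W) = φ₀·(Lψ + L̃φ₀) − ψ·Lφ₀ = 0`. In characteristic zero the kernel of `D` consists of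
the constants, so `P·W` equals its constant coefficient, which is `1`.
-/

variable (K : Type*) [CommSemiring K] in
noncomputable def eulerDerivation : Derivation K K⟦X⟧ K⟦X⟧ :=
  (X : K⟦X⟧) • d⁄dX K

@[simp]
theorem eulerDerivation_apply {K : Type*} [CommSemiring K] (f : K⟦X⟧) :
    eulerDerivation K f = eulerD f := by
  ext n
  rcases n with _ | n
  · simp [eulerDerivation, eulerD]
  · rw [eulerDerivation, Derivation.smul_apply, smul_eq_mul, coeff_succ_X_mul,
      coeff_derivative, eulerD, coeff_mk]
    push_cast
    ring

theorem eulerDerivation_C_mul {K : Type*} [CommSemiring K] (c : K) (f : K⟦X⟧) :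
    eulerDerivation K (C c * f) = C c * eulerDerivation K f := by
  rw [← smul_eq_C_mul, Derivation.map_smul, smul_eq_C_mul]

@[simp]
theorem eulerDerivation_X {K : Type*} [CommSemiring K] : eulerDerivation K X = X := by
  simp [eulerDerivation]

theorem eq_C_constantCoeff_of_eulerD_eq_zero {K : Type*} [Semiring K] [IsAddTorsionFree K]
    {f : K⟦X⟧} (hf : eulerD f = 0) : f = C (constantCoeff f) := by
  ext n
  rcases n with _ | n
  · simp
  · have h := congrArg (coeff (n + 1)) hf
    rw [eulerD, coeff_mk, map_zero, ← nsmul_eq_mul] at h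
    simpa [coeff_C] using (smul_eq_zero.mp h).resolve_left n.succ_ne_zero

theorem Derivation.leibniz_wronskian {R A : Type*} [CommSemiring R] [CommRing A] [Algebra R A]
    (d : Derivation R A A) (p r f g : A) :
    d (p * (f ^ 2 + d g * f - g * d f)) =
      f * (d (p * d g) + r * g + (2 * p * d f + d p * f)) - g * (d (p * d f) + r * f) := by
  simp only [Derivation.leibniz, Derivation.leibniz_pow, map_add, map_sub, smul_eq_mul]
  ring

noncomputable def D2lead {K : Type*} [CommSemiring K] (α₂ α₁ α₀ : K) : K⟦X⟧ :=
  1 + C α₂ * X + C α₁ * X ^ 2 + C α₀ * X ^ 3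

theorem eulerD_D2lead {K : Type*} [CommSemiring K] (α₂ α₁ α₀ : K) :
    eulerD (D2lead α₂ α₁ α₀) = C α₂ * X + 2 * (C α₁ * X ^ 2) + 3 * (C α₀ * X ^ 3) := by
  simp only [D2lead, ← eulerDerivation_apply, map_add, Derivation.map_one_eq_zero,
    eulerDerivation_C_mul, Derivation.leibniz_pow, eulerDerivation_X, smul_eq_mul, nsmul_eq_mul]
  push_cast
  ring

section D2
variable {K : Type*} [Field K] (α₂ α₁ α₀ β : K) (φ : K⟦X⟧)

theorem D2op_eq_eulerD_D2lead_mul :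
    D2op α₂ α₁ α₀ β φ = eulerD (D2lead α₂ α₁ α₀ * eulerD φ)
      + (-(C β * X) + C α₁ * X ^ 2 + 2 * (C α₀ * X ^ 3)) * φ := by
  rw [← eulerDerivation_apply, Derivation.leibniz, smul_eq_mul, smul_eq_mul,
    eulerDerivation_apply, eulerDerivation_apply, eulerD_D2lead]
  simp only [D2op, eulerDplus, D2lead, ← eulerDerivation_apply, map_add, eulerDerivation_C_mul]
  simp only [eulerDerivation_apply, map_one, map_ofNat]
  ring

theorem D2til_eq_D2lead :
    D2til α₂ α₁ α₀ φ = 2 * D2lead α₂ α₁ α₀ * eulerD φ + eulerD (D2lead α₂ α₁ α₀) * φ := by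
  rw [eulerD_D2lead]
  simp only [D2til, D2lead, eulerDplus, map_one]
  ring

end D2

theorem stmt_16 {K : Type*} [Field K] [CharZero K] (α₂ α₁ α₀ β : K)
    (φ₀ ψ : PowerSeries K)
    (hφ₀ : PowerSeries.constantCoeff φ₀ = 1)
    (hψ : PowerSeries.constantCoeff ψ = 0)
    (hL : D2op α₂ α₁ α₀ β φ₀ = 0)
    (hLψ : D2op α₂ α₁ α₀ β ψ + D2til α₂ α₁ α₀ φ₀ = 0) :
    (1 + C α₂ * X + C α₁ * X ^ 2 + C α₀ * X ^ 3)
      * (φ₀ ^ 2 + eulerD ψ * φ₀ - ψ * eulerD φ₀) = 1 := by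
  have hconserved :
      eulerD (D2lead α₂ α₁ α₀ * (φ₀ ^ 2 + eulerD ψ * φ₀ - ψ * eulerD φ₀)) = 0 := by
    have h := (eulerDerivation K).leibniz_wronskian (D2lead α₂ α₁ α₀)
      (-(C β * X) + C α₁ * X ^ 2 + 2 * (C α₀ * X ^ 3)) φ₀ ψ
    simp only [eulerDerivation_apply, ← D2op_eq_eulerD_D2lead_mul, ← D2til_eq_D2lead] at h
    rw [h, hLψ, hL]
    ring
  have hconst :
      constantCoeff (D2lead α₂ α₁ α₀ * (φ₀ ^ 2 + eulerD ψ * φ₀ - ψ * eulerD φ₀)) = 1 := by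
    simp [D2lead, eulerD, hφ₀, hψ]
  rw [← D2lead, eq_C_constantCoeff_of_eulerD_eq_zero hconserved, hconst, map_one]
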